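/- arXiv:1605.00507 — 7 statements merged into one kernel-verified Lean document; each statement's English description precedes it below -/
import Mathlib

section
/- Suppose R_n is differentiable and satisfies the Δ-RSC condition with constant κ > 0 for sparsity level s: R_n(β+δ) − R_n(β) − ∇R_n(β)^T δ ≥ κ‖δ‖₂² for all β ∈ Δ^p with ‖β‖₀ ≤ s and all δ ∈ C^Δ(s). Let β* ∈ Δ^p with ‖β*‖₀ ≤ s, and let β̂ minimize R_n over Δ^p. Set λ* = ‖∇R_n(β*)‖∞. Then ‖β̂ − β*‖₂² ≤ 4sλ*²/κ² and ‖β̂ − β*‖₁ ≤ 4sλ*/κ. -/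
/-!
Put `δ = β̂ - β*`. Since both points lie on the simplex, `δ` sums to zero and is nonnegative off
the support `J` of `β*`, so `δ ∈ C^Δ(s)`; hence `‖δ_{Jᶜ}‖₁ ≤ ‖δ_J‖₁` and `‖δ‖₁² ≤ 4s‖δ‖₂²`.
Optimality of `β̂` and the RSC condition at `β*` give the basic inequality
`κ‖δ‖₂² ≤ -∇R_n(β*)ᵀδ ≤ λ*‖δ‖₁`, and combining the two inequalities yields both bounds.
-/

open Finset

variable {ι : Type*} [Fintype ι]

theorem sq_sum_abs_le_card_mul_sum_sq (J : Finset ι) (δ : ι → ℝ) :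
    (∑ j ∈ J, |δ j|) ^ 2 ≤ #J * ∑ j, δ j ^ 2 :=
  calc (∑ j ∈ J, |δ j|) ^ 2 ≤ #J * ∑ j ∈ J, |δ j| ^ 2 := sq_sum_le_card_mul_sum_sq
    _ = #J * ∑ j ∈ J, δ j ^ 2 := by simp only [sq_abs]
    _ ≤ #J * ∑ j, δ j ^ 2 := by gcongr; exact subset_univ J

variable [DecidableEq ι]

/-- The cone `C^Δ(s)` of directions from an `s`-sparse point of the simplex. -/
def simplexCone (s : ℕ) : Set (ι → ℝ) :=
  {δ | ∃ J : Finset ι, #J ≤ s ∧ (∑ j ∈ Jᶜ, δ j) = -(∑ j ∈ J, δ j) ∧ ∀ j ∈ Jᶜ, 0 ≤ δ j}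

theorem sub_mem_simplexCone {s : ℕ} {β β' : ι → ℝ} (hβ : β ∈ stdSimplex ℝ ι)
    (hβ' : β' ∈ stdSimplex ℝ ι) (hsparse : #(univ.filter fun j => β' j ≠ 0) ≤ s) :
    β - β' ∈ simplexCone s := by
  refine ⟨univ.filter fun j => β' j ≠ 0, hsparse, ?_, fun j hj => ?_⟩
  · have hsum : ∑ j, (β - β') j = 0 := by
      simp only [Pi.sub_apply, sum_sub_distrib, hβ.2, hβ'.2, sub_self]
    rw [← sum_add_sum_compl (univ.filter fun j => β' j ≠ 0)] at hsum
    linarith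
  · simp only [mem_compl, mem_filter, mem_univ, true_and, not_not] at hj
    simpa [hj] using hβ.1 j

theorem sum_abs_le_two_mul_sum_abs_of_sum_compl_eq {J : Finset ι} {δ : ι → ℝ}
    (hsum : ∑ j ∈ Jᶜ, δ j = -∑ j ∈ J, δ j) (hpos : ∀ j ∈ Jᶜ, 0 ≤ δ j) :
    ∑ j, |δ j| ≤ 2 * ∑ j ∈ J, |δ j| := by
  have hcompl : ∑ j ∈ Jᶜ, |δ j| ≤ ∑ j ∈ J, |δ j| :=
    calc ∑ j ∈ Jᶜ, |δ j| = -∑ j ∈ J, δ j := by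
          rw [← hsum]; exact sum_congr rfl fun j hj => abs_of_nonneg (hpos j hj)
      _ ≤ |∑ j ∈ J, δ j| := neg_le_abs _
      _ ≤ ∑ j ∈ J, |δ j| := abs_sum_le_sum_abs _ _
  rw [← sum_add_sum_compl J]
  linarith

theorem sq_sum_abs_le_of_mem_simplexCone {s : ℕ} {δ : ι → ℝ} (hδ : δ ∈ simplexCone s) :
    (∑ j, |δ j|) ^ 2 ≤ 4 * s * ∑ j, δ j ^ 2 := by
  obtain ⟨J, hcard, hsum, hpos⟩ := hδ
  have hl1 := sum_abs_le_two_mul_sum_abs_of_sum_compl_eq hsum hpos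
  have hl2 := sq_sum_abs_le_card_mul_sum_sq J δ
  have hcard' : (#J : ℝ) ≤ s := by exact_mod_cast hcard
  calc (∑ j, |δ j|) ^ 2 ≤ (2 * ∑ j ∈ J, |δ j|) ^ 2 :=
        pow_le_pow_left₀ (sum_nonneg fun j _ => abs_nonneg (δ j)) hl1 2
    _ = 4 * (∑ j ∈ J, |δ j|) ^ 2 := by ring
    _ ≤ 4 * (s * ∑ j, δ j ^ 2) := by
      gcongr
      exact hl2.trans (by gcongr)
    _ = 4 * s * ∑ j, δ j ^ 2 := by ring

theorem abs_apply_le_iSup_mul_sum_abs (L : (ι → ℝ) →ₗ[ℝ] ℝ) (δ : ι → ℝ) :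
    |L δ| ≤ (⨆ j, |L (Pi.single j 1)|) * ∑ j, |δ j| := by
  have hL : L δ = ∑ j, δ j * L (Pi.single j 1) := by
    conv_lhs => rw [← LinearMap.sum_single_apply (φ := fun _ => ℝ) δ, map_sum]
    refine sum_congr rfl fun j _ => ?_
    rw [← smul_eq_mul, ← map_smul, ← Pi.single_smul', smul_eq_mul, mul_one]
  rw [hL, mul_sum]
  refine (abs_sum_le_sum_abs _ _).trans (sum_le_sum fun j _ => ?_)
  rw [abs_mul, mul_comm]
  gcongr
  exact le_ciSup (Set.finite_range fun j => |L (Pi.single j 1)|).bddAbove j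

/-- Here `Q = ‖δ‖₂²` and `A = ‖δ‖₁`. -/
theorem bounds_of_basic_inequality {κ lam Q A s : ℝ} (hκ : 0 < κ) (hlam : 0 ≤ lam)
    (hs : 0 ≤ s) (hA : 0 ≤ A) (hbasic : κ * Q ≤ lam * A) (hcone : A ^ 2 ≤ 4 * s * Q) :
    Q ≤ 4 * s * lam ^ 2 / κ ^ 2 ∧ A ≤ 4 * s * lam / κ := by
  have hA' : A ≤ 4 * s * lam / κ := by
    rw [le_div_iff₀ hκ]
    rcases hA.eq_or_lt with h0 | hpos
    · rw [← h0, zero_mul]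
      positivity
    · have := mul_le_mul_of_nonneg_left hbasic (by positivity : (0 : ℝ) ≤ 4 * s)
      have : A * (A * κ) ≤ A * (4 * s * lam) := by nlinarith
      exact le_of_mul_le_mul_left this hpos
  refine ⟨?_, hA'⟩
  rw [le_div_iff₀ (by positivity)]
  have := mul_le_mul_of_nonneg_left ((le_div_iff₀ hκ).mp hA') hlam
  nlinarith

theorem stmt_6_general (p s : ℕ) (Rn : (Fin p → ℝ) → ℝ)
    (κ : ℝ) (hκ : 0 < κ)
    (hRSC : ∀ β ∈ stdSimplex ℝ (Fin p),
      (Finset.univ.filter fun j => β j ≠ 0).card ≤ s →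
      ∀ δ : Fin p → ℝ,
        (∃ J : Finset (Fin p), J.card ≤ s ∧
          (∑ j ∈ Jᶜ, δ j) = -(∑ j ∈ J, δ j) ∧ ∀ j ∈ Jᶜ, 0 ≤ δ j) →
        Rn (β + δ) - Rn β - fderiv ℝ Rn β δ ≥ κ * ∑ j, (δ j) ^ 2)
    (βstar : Fin p → ℝ) (hβstar : βstar ∈ stdSimplex ℝ (Fin p))
    (hsparse : (Finset.univ.filter fun j => βstar j ≠ 0).card ≤ s)
    (βhat : Fin p → ℝ) (hβhat : βhat ∈ stdSimplex ℝ (Fin p))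
    (hmin : ∀ β ∈ stdSimplex ℝ (Fin p), Rn βhat ≤ Rn β)
    (lamstar : ℝ) (hlam : lamstar = ⨆ j : Fin p, |fderiv ℝ Rn βstar (Pi.single j 1)|) :
    (∑ j, (βhat j - βstar j) ^ 2) ≤ 4 * s * lamstar ^ 2 / κ ^ 2 ∧
    (∑ j, |βhat j - βstar j|) ≤ 4 * s * lamstar / κ := by
  have hcone : βhat - βstar ∈ simplexCone s := sub_mem_simplexCone hβhat hβstar hsparse
  have hrsc := hRSC βstar hβstar hsparse (βhat - βstar) hcone
  rw [add_sub_cancel] at hrsc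
  have hholder := abs_apply_le_iSup_mul_sum_abs
    (fderiv ℝ Rn βstar : (Fin p → ℝ) →ₗ[ℝ] ℝ) (βhat - βstar)
  rw [ContinuousLinearMap.coe_coe, ← hlam] at hholder
  have hbasic : κ * ∑ j, (βhat j - βstar j) ^ 2 ≤ lamstar * ∑ j, |βhat j - βstar j| := by
    have := neg_le_abs (fderiv ℝ Rn βstar (βhat - βstar))
    have := hmin βstar hβstar
    simp only [Pi.sub_apply] at hrsc hholder
    linarith
  have hlam_nonneg : 0 ≤ lamstar := hlam ▸ Real.iSup_nonneg fun j => abs_nonneg _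
  exact bounds_of_basic_inequality hκ hlam_nonneg s.cast_nonneg
    (sum_nonneg fun j _ => abs_nonneg _) hbasic (sq_sum_abs_le_of_mem_simplexCone hcone)

/-- Adaptation to sparsity of ERM over the simplex under the `Δ`-RSC condition:
`‖β̂ − β*‖₂² ≤ 4sλ*²/κ²` and `‖β̂ − β*‖₁ ≤ 4sλ*/κ` with
`λ* = ‖∇R_n(β*)‖∞`. -/
theorem stmt_6 (p s : ℕ) (Rn : (Fin p → ℝ) → ℝ) (hdiff : Differentiable ℝ Rn)
    (κ : ℝ) (hκ : 0 < κ)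
    (hRSC : ∀ β ∈ stdSimplex ℝ (Fin p),
      (Finset.univ.filter fun j => β j ≠ 0).card ≤ s →
      ∀ δ : Fin p → ℝ,
        (∃ J : Finset (Fin p), J.card ≤ s ∧
          (∑ j ∈ Jᶜ, δ j) = -(∑ j ∈ J, δ j) ∧ ∀ j ∈ Jᶜ, 0 ≤ δ j) →
        Rn (β + δ) - Rn β - fderiv ℝ Rn β δ ≥ κ * ∑ j, (δ j) ^ 2)
    (βstar : Fin p → ℝ) (hβstar : βstar ∈ stdSimplex ℝ (Fin p))
    (hsparse : (Finset.univ.filter fun j => βstar j ≠ 0).card ≤ s)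
    (βhat : Fin p → ℝ) (hβhat : βhat ∈ stdSimplex ℝ (Fin p))
    (hmin : ∀ β ∈ stdSimplex ℝ (Fin p), Rn βhat ≤ Rn β)
    (lamstar : ℝ) (hlam : lamstar = ⨆ j : Fin p, |fderiv ℝ Rn βstar (Pi.single j 1)|) :
    (∑ j, (βhat j - βstar j) ^ 2) ≤ 4 * s * lamstar ^ 2 / κ ^ 2 ∧
    (∑ j, |βhat j - βstar j|) ≤ 4 * s * lamstar / κ :=
  stmt_6_general p s Rn κ hκ hRSC βstar hβstar hsparse βhat hβhat hmin lamstar hlam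
end

section
/- Consider the denoising objective f(β) = (1/n)‖Z − β‖₂² − λ‖β‖₂² over β ∈ Δ^n, with Z ∈ ℝ^n having pairwise distinct entries. If λ > 1/n, the unique minimizer is the standard basis vector e_i with Z_i = max_k Z_k. If λ = 1/n, every minimizer equals this same e_i. -/
/-!
With `c = 1/n` the objective expands as
`f β − f eᵢ = 2c (Zᵢ − ⟪Z, β⟫) + (c − λ)(‖β‖² − 1)`.
On the simplex `‖β‖² ≤ 1`, and `⟪Z, β⟫ < Zᵢ` unless `β = eᵢ` because `Zᵢ` is the strict
maximum of `Z`. For `λ > c` both terms are then nonnegative and the first is positive; for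
`λ = c` only the first term survives, so any `β ≠ eᵢ` is beaten by `eᵢ`.
-/

open Finset

section StdSimplex

variable {𝕜 ι : Type*} [Field 𝕜] [LinearOrder 𝕜] [IsStrictOrderedRing 𝕜] [Fintype ι]

theorem sum_sq_le_one_of_mem_stdSimplex {β : ι → 𝕜} (hβ : β ∈ stdSimplex 𝕜 ι) :
    ∑ k, β k ^ 2 ≤ 1 :=
  calc ∑ k, β k ^ 2 ≤ ∑ k, β k := sum_le_sum fun k _ ↦ by
        obtain ⟨h0, h1⟩ := mem_Icc_of_mem_stdSimplex hβ k
        nlinarith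
    _ = 1 := hβ.2

omit [IsStrictOrderedRing 𝕜] in
theorem eq_single_of_mem_stdSimplex [DecidableEq ι] {β : ι → 𝕜} (hβ : β ∈ stdSimplex 𝕜 ι)
    {i : ι} (hzero : ∀ k ≠ i, β k = 0) : β = Pi.single i 1 := by
  have hβi : β i = 1 := by
    rw [← hβ.2, sum_eq_single i (fun k _ hk ↦ hzero k hk) (by simp)]
  ext k
  by_cases hk : k = i
  · subst hk; simp [hβi]
  · simp [hk, hzero k hk]

theorem sum_mul_lt_of_mem_stdSimplex [DecidableEq ι] {Z β : ι → 𝕜} {i : ι}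
    (hZ : ∀ k ≠ i, Z k < Z i) (hβ : β ∈ stdSimplex 𝕜 ι) (hne : β ≠ Pi.single i 1) :
    ∑ k, Z k * β k < Z i := by
  have hle : ∀ k, Z k * β k ≤ Z i * β k := fun k ↦ by
    rcases eq_or_ne k i with rfl | hk
    · rfl
    · exact mul_le_mul_of_nonneg_right (hZ k hk).le (hβ.1 k)
  have hlt : ∃ k, Z k * β k < Z i * β k := by
    by_contra! hge
    refine hne (eq_single_of_mem_stdSimplex hβ fun k hk ↦ ?_)
    have hZk := hZ k hk
    nlinarith [hβ.1 k, hge k, hle k]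
  calc ∑ k, Z k * β k < ∑ k, Z i * β k := sum_lt_sum (fun k _ ↦ hle k) (by simpa using hlt)
    _ = Z i := by rw [← mul_sum, hβ.2, mul_one]

end StdSimplex

theorem sum_sub_sq_sub_sum_sub_single_sq {R ι : Type*} [CommRing R] [Fintype ι] [DecidableEq ι]
    (c lam : R) (Z β : ι → R) (i : ι) :
    (c * ∑ k, (Z k - β k) ^ 2 - lam * ∑ k, β k ^ 2) -
        (c * ∑ k, (Z k - (Pi.single i 1 : ι → R) k) ^ 2 -
          lam * ∑ k, (Pi.single i 1 : ι → R) k ^ 2) =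
      2 * c * (Z i - ∑ k, Z k * β k) + (c - lam) * (∑ k, β k ^ 2 - 1) := by
  have hexpand : ∀ γ : ι → R,
      ∑ k, (Z k - γ k) ^ 2 = ∑ k, Z k ^ 2 - 2 * ∑ k, Z k * γ k + ∑ k, γ k ^ 2 := fun γ ↦ by
    simp only [sub_sq, sum_add_distrib, sum_sub_distrib, mul_sum, mul_assoc]
  have hZe : ∑ k, Z k * (Pi.single i 1 : ι → R) k = Z i := by simp [Pi.single_apply]
  have hee : ∑ k, (Pi.single i 1 : ι → R) k ^ 2 = 1 := by simp [Pi.single_apply, ite_pow]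
  rw [hexpand, hexpand, hZe, hee]
  ring

theorem stmt_8_general (n : ℕ) (Z : Fin n → ℝ) (hZ : Function.Injective Z)
    (lam : ℝ) (i : Fin n) (hi : ∀ k, Z k ≤ Z i)
    (f : (Fin n → ℝ) → ℝ)
    (hf : ∀ β, f β = (1 / n) * (∑ k, (Z k - β k) ^ 2) - lam * ∑ k, (β k) ^ 2) :
    ((1 / n : ℝ) < lam →
      ∀ β ∈ stdSimplex ℝ (Fin n), β ≠ Pi.single i 1 → f (Pi.single i 1) < f β) ∧
    (lam = (1 / n : ℝ) →
      ∀ β ∈ stdSimplex ℝ (Fin n),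
        (∀ γ ∈ stdSimplex ℝ (Fin n), f β ≤ f γ) → β = Pi.single i 1) := by
  have hc : (0 : ℝ) < 1 / n := by
    have : (0 : ℝ) < n := by exact_mod_cast i.pos
    positivity
  have hgap : ∀ β ∈ stdSimplex ℝ (Fin n), β ≠ Pi.single i 1 → ∑ k, Z k * β k < Z i :=
    fun β hβ hne ↦ sum_mul_lt_of_mem_stdSimplex
      (fun k hk ↦ (hi k).lt_of_ne fun h ↦ hk (hZ h)) hβ hne
  have hdiff : ∀ β, f β - f (Pi.single i 1) =
      2 * (1 / n) * (Z i - ∑ k, Z k * β k) + (1 / n - lam) * (∑ k, β k ^ 2 - 1) := fun β ↦ by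
    rw [hf, hf, sum_sub_sq_sub_sum_sub_single_sq]
  refine ⟨fun hlam β hβ hne ↦ ?_, fun hlam β hβ hmin ↦ ?_⟩
  · have := hdiff β
    nlinarith [hgap β hβ hne, sum_sq_le_one_of_mem_stdSimplex hβ]
  · by_contra hne
    have := hdiff β
    rw [hlam, sub_self, zero_mul, add_zero] at this
    nlinarith [hgap β hβ hne, hmin _ (single_mem_stdSimplex ℝ i)]

/-- Denoising with negative `ℓ₂`-regularization, concave regime: for
`f(β) = (1/n)‖Z − β‖₂² − λ‖β‖₂²` over `Δ^n` with `Z` having pairwise distinct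
entries, if `λ > 1/n` the unique minimizer is `e_i` with `Z_i = max_k Z_k`;
if `λ = 1/n` every minimizer equals this same `e_i`. -/
theorem stmt_8 (n : ℕ) (hn : 0 < n) (Z : Fin n → ℝ) (hZ : Function.Injective Z)
    (lam : ℝ) (i : Fin n) (hi : ∀ k, Z k ≤ Z i)
    (f : (Fin n → ℝ) → ℝ)
    (hf : ∀ β, f β = (1 / n) * (∑ k, (Z k - β k) ^ 2) - lam * ∑ k, (β k) ^ 2) :
    ((1 / n : ℝ) < lam →
      ∀ β ∈ stdSimplex ℝ (Fin n), β ≠ Pi.single i 1 → f (Pi.single i 1) < f β) ∧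
    (lam = (1 / n : ℝ) →
      ∀ β ∈ stdSimplex ℝ (Fin n),
        (∀ γ ∈ stdSimplex ℝ (Fin n), f β ≤ f γ) → β = Pi.single i 1) :=
  stmt_8_general n Z hZ lam i hi f hf
end

section
/- Let Z = β* + ε ∈ ℝ^n with β* ∈ Δ^n, ‖β*‖₀ = s, supported on S. Suppose 2s·max_i|ε_i|/n < λ < 1/n and min_{i∈S} β*_i > nλ/s + 2 max_i|ε_i|. Then the minimizer β̂ of (1/n)‖Z − β‖₂² − λ‖β‖₂² over Δ^n has support exactly S. -/
/-!
Put `ρ = nλ < 1`, so that the objective is `1/n` times `∑ (Z_k - β_k)² - ρ ∑ β_k²`. Moving mass `t`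
from a coordinate `k` of the minimizer `β̂` to a coordinate `l` changes this sum by
`-2t (w_l - w_k) + 2(1 - ρ)t²`, where `w = Z - (1 - ρ) β̂`; so `w` is maximal on the support of `β̂`,
which yields a threshold `M` with `(1 - ρ) β̂_k = max (Z_k - M) 0` (the projection formula) and
hence `∑_k max (Z_k - M) 0 = 1 - ρ`. The noise bound `E` gives `Z_k ≤ E` off `S` and
`Z_k > ρ/s + E` on `S`. If `M < Z_i` for some `i ∉ S`, then `M < E` and the sum is at least
`∑_{S ∪ {i}} (Z_k - M) > 1 - 2sE > 1 - ρ`. If `Z_j ≤ M` for some `j ∈ S`, then every term of the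
sum is below `β*_k - ρ/s` on `S` and vanishes off `S`, so the sum is `< 1 - ρ`. Hence the support
of `β̂`, which is `{k | M < Z_k}`, is `S`.
-/
open Finset

section Threshold

variable {ι : Type*} [Fintype ι]

def negRidgeLoss (Z : ι → ℝ) (ρ : ℝ) (β : ι → ℝ) : ℝ :=
  ∑ m, (Z m - β m) ^ 2 - ρ * ∑ m, β m ^ 2

lemma negRidgeLoss_add_smul (Z : ι → ℝ) (ρ t : ℝ) (β v : ι → ℝ) :
    negRidgeLoss Z ρ (β + t • v) = negRidgeLoss Z ρ β
      - 2 * t * ∑ m, (Z m - (1 - ρ) * β m) * v m + (1 - ρ) * t ^ 2 * ∑ m, v m ^ 2 := by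
  simp only [negRidgeLoss, Pi.add_apply, Pi.smul_apply, smul_eq_mul, mul_sum,
    ← sum_sub_distrib, ← sum_add_distrib]
  exact sum_congr rfl fun m _ => by ring

variable [DecidableEq ι]

lemma add_smul_single_sub_single_mem_stdSimplex {β : ι → ℝ} (hβ : β ∈ stdSimplex ℝ ι)
    (k l : ι) {t : ℝ} (ht₀ : 0 ≤ t) (htk : t ≤ β k) :
    β + t • (Pi.single l 1 - Pi.single k 1) ∈ stdSimplex ℝ ι := by
  refine ⟨fun m => ?_, ?_⟩
  · have hl : (0 : ℝ) ≤ (Pi.single l 1 : ι → ℝ) m := by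
      rw [Pi.single_apply]; split_ifs <;> norm_num
    simp only [Pi.add_apply, Pi.smul_apply, Pi.sub_apply, smul_eq_mul]
    rcases eq_or_ne m k with rfl | hmk
    · rw [Pi.single_eq_same]; nlinarith
    · rw [Pi.single_eq_of_ne hmk]; nlinarith [hβ.1 m]
  · simp [sum_add_distrib, ← mul_sum, hβ.2]

lemma sub_le_sub_of_isMinOn {Z β : ι → ℝ} {ρ : ℝ} (hρ : ρ < 1) (hβ : β ∈ stdSimplex ℝ ι)
    (hmin : IsMinOn (negRidgeLoss Z ρ) (stdSimplex ℝ ι) β) {k : ι} (hk : 0 < β k) (l : ι) :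
    Z l - (1 - ρ) * β l ≤ Z k - (1 - ρ) * β k := by
  by_contra! hlt
  set D := (Z l - (1 - ρ) * β l) - (Z k - (1 - ρ) * β k) with hD
  have hD₀ : 0 < D := sub_pos.2 hlt
  have hkl : k ≠ l := by rintro rfl; exact hlt.false
  have hγ : 0 < 1 - ρ := sub_pos.2 hρ
  set t := min (β k) (D / (2 * (1 - ρ)))
  have ht₀ : 0 < t := lt_min hk (by positivity)
  have htD : 2 * (1 - ρ) * t ≤ D := by
    have := min_le_right (β k) (D / (2 * (1 - ρ)))
    rw [le_div_iff₀ (by positivity)] at this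
    linarith
  set v : ι → ℝ := Pi.single l 1 - Pi.single k 1
  have hwv : ∑ m, (Z m - (1 - ρ) * β m) * v m = D := by
    simp [v, mul_sub, sum_sub_distrib, hD, Pi.single_apply]
  have hvv : ∑ m, v m ^ 2 = 2 := by
    have : ∀ m, v m ^ 2 = (Pi.single l 1 : ι → ℝ) m + (Pi.single k 1 : ι → ℝ) m := by
      intro m
      simp only [v, Pi.sub_apply, Pi.single_apply]
      split_ifs <;> simp_all
    rw [sum_congr rfl fun m _ => this m, sum_add_distrib]
    simp only [sum_pi_single', mem_univ, if_true]
    norm_num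
  have hle := isMinOn_iff.1 hmin _
    (add_smul_single_sub_single_mem_stdSimplex hβ k l ht₀.le (min_le_left _ _))
  rw [negRidgeLoss_add_smul, hwv, hvv] at hle
  nlinarith

omit [DecidableEq ι] in
lemma exists_pos_of_mem_stdSimplex {β : ι → ℝ} (hβ : β ∈ stdSimplex ℝ ι) : ∃ k, 0 < β k := by
  by_contra! h
  have := hβ.2 ▸ sum_nonpos fun k _ => h k
  norm_num at this

lemma exists_threshold_of_isMinOn {Z β : ι → ℝ} {ρ : ℝ} (hρ : ρ < 1) (hβ : β ∈ stdSimplex ℝ ι)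
    (hmin : IsMinOn (negRidgeLoss Z ρ) (stdSimplex ℝ ι) β) :
    ∃ M, ∀ k, (1 - ρ) * β k = max (Z k - M) 0 := by
  obtain ⟨k₀, hk₀⟩ := exists_pos_of_mem_stdSimplex hβ
  refine ⟨Z k₀ - (1 - ρ) * β k₀, fun k => ?_⟩
  have hle := sub_le_sub_of_isMinOn hρ hβ hmin hk₀ k
  rcases (hβ.1 k).eq_or_lt with hk | hk
  · rw [← hk] at hle ⊢
    rw [mul_zero, max_eq_right (by linarith)]
  · have hge := sub_le_sub_of_isMinOn hρ hβ hmin hk k₀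
    rw [max_eq_left (by nlinarith)]
    linarith

end Threshold

section Support

variable {ι : Type*} [Fintype ι] {βstar Z : ι → ℝ} {S : Finset ι} {E μ M : ℝ}

lemma sum_eq_one_of_mem_stdSimplex_of_support (hβ : βstar ∈ stdSimplex ℝ ι)
    (hS : ∀ i, i ∈ S ↔ βstar i ≠ 0) : ∑ i ∈ S, βstar i = 1 := by
  rw [← hβ.2]
  exact sum_subset (subset_univ S) fun i _ hi => not_not.1 (mt (hS i).2 hi)

variable (hβstar : βstar ∈ stdSimplex ℝ ι) (hS : ∀ i, i ∈ S ↔ βstar i ≠ 0)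
  (hZ : ∀ k, |Z k - βstar k| ≤ E) (hμ : 2 * #S * E < μ)
  (hsum : ∑ k, max (Z k - M) 0 = 1 - μ)
include hβstar hS hZ hμ hsum

lemma le_threshold_of_notMem_support {i : ι} (hi : i ∉ S) : Z i ≤ M := by
  classical
  by_contra! hMi
  have hME : M < E := by
    have := (abs_le.1 (hZ i)).2
    rw [not_not.1 (mt (hS i).2 hi)] at this
    linarith
  have hZS : 1 - #S * E ≤ ∑ k ∈ S, Z k := by
    have := sum_le_sum fun k (_ : k ∈ S) => (abs_le.1 (hZ k)).1
    rw [sum_sub_distrib, sum_eq_one_of_mem_stdSimplex_of_support hβstar hS, sum_neg_distrib,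
      sum_const, nsmul_eq_mul] at this
    linarith
  have hSM : (#S : ℝ) * M ≤ #S * E := mul_le_mul_of_nonneg_left hME.le (Nat.cast_nonneg _)
  have : (Z i - M) + (∑ k ∈ S, Z k - #S * M) ≤ 1 - μ :=
    calc (Z i - M) + (∑ k ∈ S, Z k - #S * M) = ∑ k ∈ insert i S, (Z k - M) := by
          rw [sum_insert hi, sum_sub_distrib, sum_const, nsmul_eq_mul]
      _ ≤ ∑ k ∈ insert i S, max (Z k - M) 0 := sum_le_sum fun k _ => le_max_left _ _
      _ ≤ ∑ k, max (Z k - M) 0 :=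
          sum_le_sum_of_subset_of_nonneg (subset_univ _) fun k _ _ => le_max_right _ _
      _ = 1 - μ := hsum
  linarith

lemma threshold_lt_of_mem_support (hmin : ∀ i ∈ S, μ / #S + 2 * E < βstar i) {j : ι} (hj : j ∈ S) :
    M < Z j := by
  by_contra! hZM
  have hE : 0 ≤ E := (abs_nonneg _).trans (hZ j)
  have hS₀ : (0 : ℝ) < #S := Nat.cast_pos.2 (card_pos.2 ⟨j, hj⟩)
  have hμS : 0 ≤ μ / #S := div_nonneg (by nlinarith) hS₀.le
  have hEM : μ / #S + E < M := by linarith [(abs_le.1 (hZ j)).1, hmin j hj]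
  have hoff : ∀ k ∉ S, max (Z k - M) 0 = 0 := fun k hk => by
    have := (abs_le.1 (hZ k)).2
    rw [not_not.1 (mt (hS k).2 hk)] at this
    exact max_eq_right (by linarith)
  have : ∑ k ∈ S, max (Z k - M) 0 < ∑ k ∈ S, (βstar k - μ / #S) :=
    sum_lt_sum_of_nonempty ⟨j, hj⟩ fun k hk => max_lt
      (by linarith [(abs_le.1 (hZ k)).2]) (by linarith [hmin k hk])
  rw [sum_subset (subset_univ S) fun k _ hk => hoff k hk, hsum, sum_sub_distrib,
    sum_eq_one_of_mem_stdSimplex_of_support hβstar hS, sum_const, nsmul_eq_mul,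
    mul_div_cancel₀ _ hS₀.ne'] at this
  exact this.false

end Support

lemma ne_zero_iff_mem_of_threshold {ι : Type*} [Fintype ι] {βstar Z βhat : ι → ℝ} {S : Finset ι}
    {E μ M : ℝ} (hβstar : βstar ∈ stdSimplex ℝ ι) (hS : ∀ i, i ∈ S ↔ βstar i ≠ 0)
    (hZ : ∀ k, |Z k - βstar k| ≤ E) (hμ : 2 * #S * E < μ)
    (hmin : ∀ i ∈ S, μ / #S + 2 * E < βstar i) (hμ₁ : μ < 1) (hβhat : βhat ∈ stdSimplex ℝ ι)
    (hM : ∀ k, (1 - μ) * βhat k = max (Z k - M) 0) (k : ι) :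
    βhat k ≠ 0 ↔ k ∈ S := by
  have hsum : ∑ k, max (Z k - M) 0 = 1 - μ := by
    simp_rw [← hM, ← mul_sum, hβhat.2, mul_one]
  have hpos : βhat k ≠ 0 ↔ M < Z k := by
    rw [← mul_ne_zero_iff_left (sub_ne_zero.2 hμ₁.ne'), hM, ne_eq, max_eq_right_iff,
      not_le, sub_pos]
  rw [hpos]
  exact ⟨fun h => by_contra fun hk => (le_threshold_of_notMem_support hβstar hS hZ hμ hsum hk).not_gt h,
    threshold_lt_of_mem_support hβstar hS hZ hμ hsum hmin⟩

/-- Support recovery for denoising with negative `ℓ₂`-regularization: under the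
conditions `2s·max_i|ε_i|/n < λ < 1/n` and `min_{i∈S} β*_i > nλ/s + 2 max_i|ε_i|`,
the minimizer of `(1/n)‖Z − β‖₂² − λ‖β‖₂²` over `Δ^n` has support exactly `S`. -/
theorem stmt_10 (n s : ℕ) (hn : 0 < n)
    (βstar : Fin n → ℝ) (hβstar : βstar ∈ stdSimplex ℝ (Fin n))
    (S : Finset (Fin n)) (hS : ∀ i, i ∈ S ↔ βstar i ≠ 0) (hcard : S.card = s)
    (ε : Fin n → ℝ) (Z : Fin n → ℝ) (hZ : Z = βstar + ε)
    (lam : ℝ)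
    (hlam1 : 2 * s * (⨆ i, |ε i|) / n < lam) (hlam2 : lam < 1 / n)
    (hbmin : ∀ i ∈ S, βstar i > n * lam / s + 2 * ⨆ i, |ε i|)
    (f : (Fin n → ℝ) → ℝ)
    (hf : ∀ β, f β = (1 / n) * (∑ k, (Z k - β k) ^ 2) - lam * ∑ k, (β k) ^ 2)
    (βhat : Fin n → ℝ) (hβhat : βhat ∈ stdSimplex ℝ (Fin n))
    (hmin : ∀ β ∈ stdSimplex ℝ (Fin n), f βhat ≤ f β) :
    ∀ i, βhat i ≠ 0 ↔ i ∈ S := by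
  subst hcard hZ
  have hn' : (0 : ℝ) < n := Nat.cast_pos.2 hn
  have hε : ∀ k, |(βstar + ε) k - βstar k| ≤ ⨆ i, |ε i| := fun k => by
    rw [Pi.add_apply, add_sub_cancel_left]
    exact le_ciSup (Set.finite_range fun i => |ε i|).bddAbove k
  have hμ : 2 * #S * (⨆ i, |ε i|) < n * lam := by rwa [div_lt_iff₀ hn', mul_comm lam] at hlam1
  have hμ₁ : n * lam < 1 := by rwa [lt_div_iff₀ hn', mul_comm] at hlam2
  have hf_eq : ∀ β, f β = negRidgeLoss (βstar + ε) (n * lam) β / n := fun β => by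
    rw [hf, negRidgeLoss]
    field_simp
  have hloss : IsMinOn (negRidgeLoss (βstar + ε) (n * lam)) (stdSimplex ℝ (Fin n)) βhat :=
    isMinOn_iff.2 fun β hβ => by
      simpa only [hf_eq, div_le_div_iff_of_pos_right hn'] using hmin β hβ
  obtain ⟨M, hM⟩ := exists_threshold_of_isMinOn hμ₁ hβhat hloss
  exact ne_zero_iff_mem_of_threshold hβstar hS hε hμ hbmin hμ₁ hβhat hM
end

section
/- The Euclidean projection of x ∈ ℝ^n onto the simplex Δ^n is given coordinatewise by (Π_{Δ^n}(x))_i = max{x_i − τ, 0}, where, if x_{(1)} ≥ ... ≥ x_{(n)} are the sorted entries, τ = (1/q)(∑_{i=1}^q x_{(i)} − 1) with q = max{k : x_{(k)} > (1/k)(∑_{i=1}^k x_{(i)} − 1)}. -/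
/-!
Put `b i = max (x i - τ) 0`. With the entries sorted decreasingly, those of index `≤ jq` exceed `τ`
and, by the maximality of `jq` applied to `jq + 1`, the later ones do not; so the excess of the
first `jq + 1` entries over `τ`, which sums to `1` by the choice of `τ`, is all of `∑ b`, and
`b ∈ Δ`. Moreover `x - b ≤ τ` with equality where `b > 0`, hence `∑ (x - b)(β - b) ≤ τ - τ = 0`
for every `β ∈ Δ`; expanding `‖x - β‖² = ‖x - b‖² - 2⟪x - b, β - b⟫ + ‖β - b‖²` shows that `b`
is the only minimizer.
-/

open Finset

section Projection

variable {ι : Type*} [Fintype ι]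

theorem sub_mul_sub_max_sub_le (x τ β : ℝ) (hβ : 0 ≤ β) :
    (x - max (x - τ) 0) * (β - max (x - τ) 0) ≤ τ * β - τ * max (x - τ) 0 := by
  rcases le_total (x - τ) 0 with h | h
  · rw [max_eq_right h]
    nlinarith
  · rw [max_eq_left h]
    exact le_of_eq (by ring)

theorem sum_sub_mul_sub_max_sub_nonpos {x : ι → ℝ} {τ : ℝ} (hτ : ∑ i, max (x i - τ) 0 = 1)
    {β : ι → ℝ} (hβ : β ∈ stdSimplex ℝ ι) :
    ∑ i, (x i - max (x i - τ) 0) * (β i - max (x i - τ) 0) ≤ 0 :=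
  calc ∑ i, (x i - max (x i - τ) 0) * (β i - max (x i - τ) 0)
      ≤ ∑ i, (τ * β i - τ * max (x i - τ) 0) :=
        sum_le_sum fun i _ => sub_mul_sub_max_sub_le _ _ _ (hβ.1 i)
    _ = 0 := by rw [sum_sub_distrib, ← mul_sum, ← mul_sum, hβ.2, hτ, sub_self]

theorem sum_sq_sub_add_sum_sq_sub_le {x b β : ι → ℝ}
    (hb : ∑ i, (x i - b i) * (β i - b i) ≤ 0) :
    ∑ i, (x i - b i) ^ 2 + ∑ i, (β i - b i) ^ 2 ≤ ∑ i, (x i - β i) ^ 2 := by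
  have hexpand : ∑ i, (x i - β i) ^ 2 = ∑ i, (x i - b i) ^ 2
      - 2 * ∑ i, (x i - b i) * (β i - b i) + ∑ i, (β i - b i) ^ 2 := by
    rw [mul_sum, ← sum_sub_distrib, ← sum_add_distrib]
    exact sum_congr rfl fun i _ => by ring
  linarith

theorem eq_of_sum_sq_sub_le_of_sum_sub_mul_sub_nonpos {x b β : ι → ℝ}
    (hb : ∑ i, (x i - b i) * (β i - b i) ≤ 0)
    (hβ : ∑ i, (x i - β i) ^ 2 ≤ ∑ i, (x i - b i) ^ 2) : β = b := by
  have hzero : ∑ i, (β i - b i) ^ 2 = 0 :=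
    le_antisymm (by linarith [sum_sq_sub_add_sum_sq_sub_le hb])
      (sum_nonneg fun i _ => sq_nonneg _)
  funext i
  have hi := (sum_eq_zero_iff_of_nonneg fun i _ => sq_nonneg (β i - b i)).mp hzero i (mem_univ i)
  exact sub_eq_zero.mp (pow_eq_zero_iff two_ne_zero |>.mp hi)

theorem eq_max_sub_of_forall_sum_sq_sub_le {x : ι → ℝ} {τ : ℝ}
    (hτ : ∑ i, max (x i - τ) 0 = 1) {βhat : ι → ℝ} (hβhat : βhat ∈ stdSimplex ℝ ι)
    (hmin : ∀ β ∈ stdSimplex ℝ ι, ∑ i, (x i - βhat i) ^ 2 ≤ ∑ i, (x i - β i) ^ 2) :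
    βhat = fun i => max (x i - τ) 0 :=
  eq_of_sum_sq_sub_le_of_sum_sub_mul_sub_nonpos (sum_sub_mul_sub_max_sub_nonpos hτ hβhat)
    (hmin _ ⟨fun _ => le_max_right _ _, hτ⟩)

theorem sum_max_sub_eq_sum_sub_card_mul {y : ι → ℝ} {τ : ℝ} (s : Finset ι)
    (hs : ∀ i ∈ s, τ ≤ y i) (hsc : ∀ i ∉ s, y i ≤ τ) :
    ∑ i, max (y i - τ) 0 = ∑ i ∈ s, y i - #s * τ := by
  classical
  rw [← sum_add_sum_compl s, sum_congr rfl fun i hi => max_eq_left (sub_nonneg.mpr (hs i hi)),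
    sum_eq_zero fun i hi => max_eq_right (sub_nonpos.mpr (hsc i (mem_compl.mp hi))),
    add_zero, sum_sub_distrib, sum_const, nsmul_eq_mul]

end Projection

section Threshold

variable {n : ℕ}

/-- The paper's `(1/k)(∑_{i ≤ k} y_i - 1)` for `k = j + 1`: indices of `Fin n` start at `0`. -/
noncomputable def partialThreshold (y : Fin n → ℝ) (j : Fin n) : ℝ :=
  1 / ((j : ℕ) + 1) * ((∑ i ∈ Iic j, y i) - 1)

theorem card_mul_partialThreshold (y : Fin n → ℝ) (j : Fin n) :
    ((j : ℕ) + 1 : ℝ) * partialThreshold y j = (∑ i ∈ Iic j, y i) - 1 := by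
  unfold partialThreshold
  field_simp

theorem le_partialThreshold_of_not_lt_succ (y : Fin n → ℝ) (j : Fin n) (hj : (j : ℕ) + 1 < n)
    (h : ¬ y ⟨j + 1, hj⟩ > partialThreshold y ⟨j + 1, hj⟩) :
    y ⟨j + 1, hj⟩ ≤ partialThreshold y j := by
  set j' : Fin n := ⟨j + 1, hj⟩
  have hIio : Iio j' = Iic j := by
    ext i
    simp only [mem_Iio, mem_Iic, Fin.lt_def, Fin.le_def, j']
    omega
  have hsum : ∑ i ∈ Iic j', y i = ∑ i ∈ Iic j, y i + y j' := by
    rw [Iic_eq_cons_Iio, sum_cons, hIio, add_comm]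
  have hj' := card_mul_partialThreshold y j'
  have hjj := card_mul_partialThreshold y j
  rw [hsum] at hj'
  have hcast : ((j' : ℕ) : ℝ) = (j : ℕ) + 1 := by simp [j']
  rw [hcast] at hj'
  rw [gt_iff_lt, not_lt] at h
  have hpos : (0 : ℝ) < (j : ℕ) + 1 := by positivity
  have hscaled := mul_le_mul_of_nonneg_left h (by positivity : (0 : ℝ) ≤ (j : ℕ) + 1 + 1)
  exact le_of_mul_le_mul_left (by linarith) hpos

theorem le_partialThreshold_of_lt {y : Fin n → ℝ} (hy : Antitone y) {jq j : Fin n}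
    (hmax : ∀ j, y j > partialThreshold y j → j ≤ jq) (hj : jq < j) :
    y j ≤ partialThreshold y jq := by
  have hsucc : (jq : ℕ) + 1 < n := lt_of_le_of_lt hj j.isLt
  have hnot : ¬ y ⟨jq + 1, hsucc⟩ > partialThreshold y ⟨jq + 1, hsucc⟩ := fun h =>
    absurd (Fin.le_def.mp (hmax _ h)) (by simp)
  have hle : (⟨jq + 1, hsucc⟩ : Fin n) ≤ j := Fin.lt_def.mp hj
  exact (hy hle).trans (le_partialThreshold_of_not_lt_succ y jq hsucc hnot)

theorem sum_max_sub_partialThreshold {y : Fin n → ℝ} (hy : Antitone y) {jq : Fin n}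
    (hjq : y jq > partialThreshold y jq) (hmax : ∀ j, y j > partialThreshold y j → j ≤ jq) :
    ∑ j, max (y j - partialThreshold y jq) 0 = 1 := by
  rw [sum_max_sub_eq_sum_sub_card_mul (Iic jq)
      (fun j hj => hjq.le.trans (hy (mem_Iic.mp hj)))
      (fun j hj => le_partialThreshold_of_lt hy hmax (not_le.mp (mem_Iic.not.mp hj))),
    Fin.card_Iic]
  push_cast
  linarith [card_mul_partialThreshold y jq]

end Threshold

theorem stmt_11_general (n : ℕ) (x : Fin n → ℝ)
    (σ : Equiv.Perm (Fin n)) (hsort : Antitone (x ∘ σ))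
    (jq : Fin n)
    (hjq : x (σ jq) > (1 / ((jq : ℕ) + 1)) * ((∑ i ∈ Finset.Iic jq, x (σ i)) - 1))
    (hjqmax : ∀ j : Fin n,
      x (σ j) > (1 / ((j : ℕ) + 1)) * ((∑ i ∈ Finset.Iic j, x (σ i)) - 1) → j ≤ jq)
    (τ : ℝ) (hτ : τ = (1 / ((jq : ℕ) + 1)) * ((∑ i ∈ Finset.Iic jq, x (σ i)) - 1))
    (βhat : Fin n → ℝ) (hβhat : βhat ∈ stdSimplex ℝ (Fin n))
    (hmin : ∀ β ∈ stdSimplex ℝ (Fin n),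
      ∑ i, (x i - βhat i) ^ 2 ≤ ∑ i, (x i - β i) ^ 2) :
    ∀ i, βhat i = max (x i - τ) 0 := by
  have hτ1 : ∑ i, max (x i - τ) 0 = 1 := by
    rw [← Equiv.sum_comp σ, hτ]
    exact sum_max_sub_partialThreshold (y := x ∘ σ) hsort hjq hjqmax
  exact congrFun (eq_max_sub_of_forall_sum_sq_sub_le hτ1 hβhat hmin)

/-- Euclidean projection onto the simplex: with the entries of `x` sorted in
decreasing order via a permutation `σ` (`y = x ∘ σ`), `q − 1 = jq` the largest
index with `y_{jq} > (1/(jq+1))(∑_{i ≤ jq} y_i − 1)` and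
`τ = (1/(jq+1))(∑_{i ≤ jq} y_i − 1)`, the projection of `x` onto `Δ^n` is
given coordinatewise by `max{x_i − τ, 0}`. -/
theorem stmt_11 (n : ℕ) (hn : 0 < n) (x : Fin n → ℝ)
    (σ : Equiv.Perm (Fin n)) (hsort : Antitone (x ∘ σ))
    (jq : Fin n)
    (hjq : x (σ jq) > (1 / ((jq : ℕ) + 1)) * ((∑ i ∈ Finset.Iic jq, x (σ i)) - 1))
    (hjqmax : ∀ j : Fin n,
      x (σ j) > (1 / ((j : ℕ) + 1)) * ((∑ i ∈ Finset.Iic j, x (σ i)) - 1) → j ≤ jq)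
    (τ : ℝ) (hτ : τ = (1 / ((jq : ℕ) + 1)) * ((∑ i ∈ Finset.Iic jq, x (σ i)) - 1))
    (βhat : Fin n → ℝ) (hβhat : βhat ∈ stdSimplex ℝ (Fin n))
    (hmin : ∀ β ∈ stdSimplex ℝ (Fin n),
      ∑ i, (x i - βhat i) ^ 2 ≤ ∑ i, (x i - β i) ^ 2) :
    ∀ i, βhat i = max (x i - τ) 0 :=
  stmt_11_general n x σ hsort jq hjq hjqmax τ hτ βhat hβhat hmin
end

section
/- Let R_n : ℝ^p → ℝ be continuous, λ ≥ 0, f(β) = R_n(β) − λ‖β‖₂², and let the CCCP iteration on the compact set Δ^p be β^{k+1} ∈ argmin_{β∈Δ^p} R_n(β) − 2λ⟨β^k, β − β^k⟩. If a subsequence of {β^k} converges to β̄ ∈ Δ^p and f(β^k) is nonincreasing with limit f̄ = f(β̄), then β̄ minimizes β ↦ R_n(β) − 2λ⟨β̄, β − β̄⟩ over Δ^p; in particular, if R_n is differentiable, −∇R_n(β̄) + 2λβ̄ lies in the normal cone of Δ^p at β̄. -/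
/-!
Completing the square, `f(y) = g(x, y) - λ‖x‖² - λ‖y - x‖²`, where `g(x, ·)` is the linearized
objective at `x`; so `g(x, ·) - λ‖x‖²` majorizes `f` and touches it at `x`. Hence
`f(β^{k+1}) ≤ g(β^k, b) - λ‖β^k‖²` for every `b ∈ Δ^p`, and passing to the limit along the
subsequence gives `g(β̄, β̄) = f(β̄) + λ‖β̄‖² ≤ g(β̄, b)`. The normal cone statement is the
first-order optimality condition for this minimization on a convex set.
-/

open Filter Topology

theorem le_fderiv_of_isMinOn_sub_clm {E : Type*} [NormedAddCommGroup E] [NormedSpace ℝ E]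
    {F : E → ℝ} {ℓ : StrongDual ℝ E} {s : Set E} {x y : E}
    (hs : Convex ℝ s) (hx : x ∈ s) (hy : y ∈ s) (hmin : IsMinOn (fun z => F z - ℓ (z - x)) s x)
    (hF : DifferentiableAt ℝ F x) : ℓ (y - x) ≤ fderiv ℝ F x (y - x) := by
  have hG : HasFDerivAt (fun z => F z - ℓ (z - x)) (fderiv ℝ F x - ℓ) x := by
    simpa only [map_sub] using hF.hasFDerivAt.fun_sub (ℓ.hasFDerivAt.sub_const (ℓ x))
  simpa using hmin.localize.hasFDerivWithinAt_nonneg hG.hasFDerivWithinAt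
    (sub_mem_posTangentConeAt_of_segment_subset (hs.segment_subset hx hy))

namespace CCCP

variable {ι : Type*} [Fintype ι] (R : (ι → ℝ) → ℝ) (lam : ℝ)

def dcObjective (y : ι → ℝ) : ℝ :=
  R y - lam * ∑ j, y j ^ 2

def linearizedObjective (x y : ι → ℝ) : ℝ :=
  R y - 2 * lam * ∑ j, x j * (y j - x j)

variable {R lam}

@[simp]
theorem linearizedObjective_self (x : ι → ℝ) : linearizedObjective R lam x x = R x := by
  simp [linearizedObjective]

theorem smul_sum_smul_proj_apply (c : ℝ) (x v : ι → ℝ) :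
    (c • ∑ j, x j • ContinuousLinearMap.proj (R := ℝ) j) v = c * ∑ j, x j * v j := by
  simp [Finset.mul_sum]

theorem linearizedObjective_eq_sub_clm (x : ι → ℝ) :
    linearizedObjective R lam x =
      fun y => R y - ((2 * lam) • ∑ j, x j • ContinuousLinearMap.proj (R := ℝ) j) (y - x) := by
  ext y
  rw [smul_sum_smul_proj_apply]
  rfl

theorem dcObjective_le_linearizedObjective_sub (hlam : 0 ≤ lam) (x y : ι → ℝ) :
    dcObjective R lam y ≤ linearizedObjective R lam x y - lam * ∑ j, x j ^ 2 := by
  have hsq : ∑ j, (y j - x j) ^ 2 = ∑ j, y j ^ 2 - 2 * ∑ j, x j * (y j - x j) - ∑ j, x j ^ 2 := by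
    simp only [Finset.mul_sum, ← Finset.sum_sub_distrib]
    exact Finset.sum_congr rfl fun j _ => by ring
  have hgap : linearizedObjective R lam x y - lam * ∑ j, x j ^ 2 - dcObjective R lam y =
      lam * ∑ j, (y j - x j) ^ 2 := by
    rw [hsq, linearizedObjective, dcObjective]
    ring
  have : 0 ≤ lam * ∑ j, (y j - x j) ^ 2 := by positivity
  linarith

theorem isMinOn_linearizedObjective_of_tendsto_subseq (hlam : 0 ≤ lam) {S : Set (ι → ℝ)}
    {β : ℕ → ι → ℝ}
    (hstep : ∀ k, ∀ b ∈ S, linearizedObjective R lam (β k) (β (k + 1)) ≤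
      linearizedObjective R lam (β k) b)
    {x : ι → ℝ} {φ : ℕ → ℕ} (hφ : StrictMono φ) (hconv : Tendsto (fun i => β (φ i)) atTop (𝓝 x))
    (hlim : Tendsto (fun k => dcObjective R lam (β k)) atTop (𝓝 (dcObjective R lam x))) :
    IsMinOn (linearizedObjective R lam x) S x := by
  intro b hb
  have hmaj : ∀ i, dcObjective R lam (β (φ i + 1)) ≤
      linearizedObjective R lam (β (φ i)) b - lam * ∑ j, β (φ i) j ^ 2 := fun i =>
    (dcObjective_le_linearizedObjective_sub hlam _ _).trans (by linarith [hstep (φ i) b hb])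
  have hleft : Tendsto (fun i => dcObjective R lam (β (φ i + 1))) atTop
      (𝓝 (dcObjective R lam x)) :=
    hlim.comp ((tendsto_add_atTop_nat 1).comp hφ.tendsto_atTop)
  have hright : Tendsto (fun i => linearizedObjective R lam (β (φ i)) b - lam * ∑ j, β (φ i) j ^ 2)
      atTop (𝓝 (linearizedObjective R lam x b - lam * ∑ j, x j ^ 2)) := by
    have hcont :
        Continuous fun z : ι → ℝ => linearizedObjective R lam z b - lam * ∑ j, z j ^ 2 := by
      unfold linearizedObjective
      fun_prop
    exact (hcont.tendsto x).comp hconv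
  have hlimit := le_of_tendsto_of_tendsto' hleft hright hmaj
  show linearizedObjective R lam x x ≤ linearizedObjective R lam x b
  rw [linearizedObjective_self]
  rw [dcObjective] at hlimit
  linarith

end CCCP

open CCCP in
theorem stmt_13_general (p : ℕ) (Rn : (Fin p → ℝ) → ℝ)
    (lam : ℝ) (hlam : 0 ≤ lam)
    (f : (Fin p → ℝ) → ℝ)
    (hf : ∀ β, f β = Rn β - lam * ∑ j, (β j) ^ 2)
    (β : ℕ → (Fin p → ℝ))
    (hiter : ∀ k, ∀ b ∈ stdSimplex ℝ (Fin p),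
      Rn (β (k + 1)) - 2 * lam * (∑ j, β k j * (β (k + 1) j - β k j)) ≤
        Rn b - 2 * lam * (∑ j, β k j * (b j - β k j)))
    (βbar : Fin p → ℝ) (hβbar : βbar ∈ stdSimplex ℝ (Fin p))
    (φ : ℕ → ℕ) (hφ : StrictMono φ)
    (hconv : Filter.Tendsto (fun i => β (φ i)) Filter.atTop (nhds βbar))
    (hflim : Filter.Tendsto (fun k => f (β k)) Filter.atTop (nhds (f βbar))) :
    (∀ b ∈ stdSimplex ℝ (Fin p),
      Rn βbar ≤ Rn b - 2 * lam * (∑ j, βbar j * (b j - βbar j))) ∧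
    (Differentiable ℝ Rn → ∀ b ∈ stdSimplex ℝ (Fin p),
      -(fderiv ℝ Rn βbar (b - βbar)) + 2 * lam * (∑ j, βbar j * (b j - βbar j)) ≤ 0) := by
  obtain rfl : f = dcObjective Rn lam := funext hf
  have hmin : IsMinOn (linearizedObjective Rn lam βbar) (stdSimplex ℝ (Fin p)) βbar :=
    isMinOn_linearizedObjective_of_tendsto_subseq hlam hiter hφ hconv hflim
  refine ⟨fun b hb => (linearizedObjective_self βbar).symm.trans_le (hmin hb),
    fun hdiff b hb => ?_⟩
  rw [linearizedObjective_eq_sub_clm] at hmin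
  have hfirst := le_fderiv_of_isMinOn_sub_clm (convex_stdSimplex ℝ (Fin p)) hβbar hb hmin
    (hdiff βbar)
  rw [smul_sum_smul_proj_apply] at hfirst
  exact neg_add_nonpos_iff.mpr hfirst

/-- Convergence of the CCCP iteration for `f(β) = R_n(β) − λ‖β‖₂²` on `Δ^p`:
a subsequential limit `β̄` with `f(β^k)` nonincreasing and converging to `f(β̄)`
minimizes the linearized objective `β ↦ R_n(β) − 2λ⟨β̄, β − β̄⟩` over `Δ^p`; in
particular, if `R_n` is differentiable, `−∇R_n(β̄) + 2λβ̄` lies in the normal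
cone of `Δ^p` at `β̄`. -/
theorem stmt_13 (p : ℕ) (Rn : (Fin p → ℝ) → ℝ) (hcont : Continuous Rn)
    (lam : ℝ) (hlam : 0 ≤ lam)
    (f : (Fin p → ℝ) → ℝ)
    (hf : ∀ β, f β = Rn β - lam * ∑ j, (β j) ^ 2)
    (β : ℕ → (Fin p → ℝ)) (hβ : ∀ k, β k ∈ stdSimplex ℝ (Fin p))
    (hiter : ∀ k, ∀ b ∈ stdSimplex ℝ (Fin p),
      Rn (β (k + 1)) - 2 * lam * (∑ j, β k j * (β (k + 1) j - β k j)) ≤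
        Rn b - 2 * lam * (∑ j, β k j * (b j - β k j)))
    (βbar : Fin p → ℝ) (hβbar : βbar ∈ stdSimplex ℝ (Fin p))
    (φ : ℕ → ℕ) (hφ : StrictMono φ)
    (hconv : Filter.Tendsto (fun i => β (φ i)) Filter.atTop (nhds βbar))
    (hdec : Antitone (fun k => f (β k)))
    (hflim : Filter.Tendsto (fun k => f (β k)) Filter.atTop (nhds (f βbar))) :
    (∀ b ∈ stdSimplex ℝ (Fin p),
      Rn βbar ≤ Rn b - 2 * lam * (∑ j, βbar j * (b j - βbar j))) ∧
    (Differentiable ℝ Rn → ∀ b ∈ stdSimplex ℝ (Fin p),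
      -(fderiv ℝ Rn βbar (b - βbar)) + 2 * lam * (∑ j, βbar j * (b j - βbar j)) ≤ 0) :=
  stmt_13_general p Rn lam hlam f hf β hiter βbar hβbar φ hφ hconv hflim
end

section
/- Let B* ∈ ℍ^m with B* ⪰ 0, tr(B*) = 1, rank(B*) ≤ r, and let B ∈ ℍ^m with B ⪰ 0, tr(B) = 1. Let 𝕋 = 𝕋(B*) be the tangent space at B* and Φ = B − B*. Then tr(Π_{𝕋^⊥}Φ) = −tr(Π_{𝕋}Φ) and Π_{𝕋^⊥}Φ ⪰ 0; moreover ‖Π_{𝕋^⊥}Φ‖₁ ≤ ‖Π_{𝕋}Φ‖₁ and ‖Φ‖₁ ≤ 2√(2r)‖Φ‖₂. -/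
/-!
Since `Q` annihilates `B* = U Λ Uᴴ`, `QΦQ = QBQ ⪰ 0`, and the trace identity is `tr Φ = 0`. For
Hermitian matrices the nuclear and Frobenius norms are the `ℓ¹` and `ℓ²` norms of the spectrum,
so the third claim reads `tr(QΦQ) = -tr(Φ - QΦQ) ≤ ‖Φ - QΦQ‖₁`. For the last one, `Φ` is positive
semidefinite on `ker Uᴴ`, a subspace of codimension at most `r`, so `Φ` has at most `r` negative
eigenvalues. Since the eigenvalues sum to zero, `‖Φ‖₁` is twice the sum of the absolute values of
the negative ones, which Cauchy–Schwarz bounds by `2√r ‖Φ‖₂`.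
-/

open Matrix ComplexOrder

/-- Squared Frobenius norm of a complex matrix. -/
noncomputable def frobSq {m : ℕ} (A : Matrix (Fin m) (Fin m) ℂ) : ℝ :=
  ∑ i, ∑ j, ‖A i j‖ ^ 2

/-- Nuclear (Schatten-1) norm: sum of the singular values. -/
noncomputable def nuclearNorm {m : ℕ} (A : Matrix (Fin m) (Fin m) ℂ) : ℝ :=
  ∑ i, Real.sqrt ((Matrix.posSemidef_conjTranspose_mul_self A).1.eigenvalues i)

namespace Matrix.IsHermitian

variable {𝕜 n : Type*} [RCLike 𝕜] [Fintype n] [DecidableEq n] {A : Matrix n n 𝕜}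

theorem trace_cfc (hA : A.IsHermitian) (f : ℝ → ℝ) :
    (cfc f A).trace = ∑ i, (f (hA.eigenvalues i) : 𝕜) := by
  rw [hA.cfc_eq, IsHermitian.cfc, Unitary.conjStarAlgAut_apply, trace_mul_cycle,
    Unitary.coe_star_mul_self, one_mul, trace_diagonal]
  rfl

theorem conjTranspose_mul_self_eq_cfc_sq (hA : A.IsHermitian) :
    Aᴴ * A = cfc (· ^ 2 : ℝ → ℝ) A := by
  rw [cfc_pow_id A 2 hA.isSelfAdjoint, hA.eq, sq]

theorem card_neg_eigenvalues_le {κ : Type*} [Fintype κ] (hA : A.IsHermitian)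
    (U : Matrix n κ 𝕜) (hU : ∀ x, Uᴴ *ᵥ x = 0 → 0 ≤ star x ⬝ᵥ (A *ᵥ x)) :
    Fintype.card {i // hA.eigenvalues i < 0} ≤ Fintype.card κ := by
  -- `A` is negative definite on the span of its negative eigenvectors, which therefore meets
  -- `ker Uᴴ` only in `0`.
  set V : Matrix n n 𝕜 := (hA.eigenvectorUnitary : Matrix n n 𝕜)
  let W : Matrix n {i // hA.eigenvalues i < 0} 𝕜 := V.submatrix id Subtype.val
  have hW :
      Wᴴ * A * W = diagonal fun j : {i // hA.eigenvalues i < 0} => (hA.eigenvalues j : 𝕜) := by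
    have hdiag : star V * A * V = diagonal (RCLike.ofReal ∘ hA.eigenvalues) := by
      simpa [Unitary.conjStarAlgAut_star_apply] using hA.conjStarAlgAut_star_eigenvectorUnitary
    have : Wᴴ * A * W = (star V * A * V).submatrix Subtype.val Subtype.val := by
      ext i j; simp [W, mul_apply, star_eq_conjTranspose]
    rw [this, hdiag, submatrix_diagonal _ _ Subtype.val_injective]
    rfl
  have hneg : (-(Wᴴ * A * W)).PosDef := by
    rw [hW, diagonal_neg, posDef_diagonal_iff]
    intro j
    simpa using j.2
  have hinj : Function.Injective (Uᴴ * W).mulVecLin := by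
    rw [← LinearMap.ker_eq_bot, LinearMap.ker_eq_bot']
    intro c hc
    by_contra hc0
    have hpos := hneg.dotProduct_mulVec_pos hc0
    have hnonneg := hU (W *ᵥ c) (by simpa [mulVec_mulVec] using hc)
    rw [neg_mulVec, dotProduct_neg, neg_pos] at hpos
    simp only [star_mulVec, ← dotProduct_mulVec, mulVec_mulVec, ← Matrix.mul_assoc] at hnonneg
    exact (hnonneg.trans_lt hpos).false
  simpa using LinearMap.finrank_le_finrank_of_injective hinj

end Matrix.IsHermitian

namespace Matrix

variable {m : ℕ} {A : Matrix (Fin m) (Fin m) ℂ}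

theorem IsHermitian.nuclearNorm_eq_sum_abs_eigenvalues (hA : A.IsHermitian) :
    nuclearNorm A = ∑ i, |hA.eigenvalues i| := by
  have hsqrt : cfc Real.sqrt (Aᴴ * A) = cfc (fun x : ℝ => |x|) A := by
    rw [hA.conjTranspose_mul_self_eq_cfc_sq, ← cfc_comp Real.sqrt (· ^ 2) A hA.isSelfAdjoint]
    simp only [Function.comp_def, Real.sqrt_sq_eq_abs]
  have := (posSemidef_conjTranspose_mul_self A).1.trace_cfc Real.sqrt
  rw [hsqrt, hA.trace_cfc] at this
  exact_mod_cast this.symm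

theorem IsHermitian.frobSq_eq_sum_sq_eigenvalues (hA : A.IsHermitian) :
    frobSq A = ∑ i, hA.eigenvalues i ^ 2 := by
  have htrace : (Aᴴ * A).trace = (frobSq A : ℂ) := by
    simp only [trace, diag, mul_apply, conjTranspose_apply, frobSq, Complex.ofReal_sum,
      Complex.ofReal_pow, Complex.star_def, Complex.conj_mul']
    exact Finset.sum_comm
  rw [hA.conjTranspose_mul_self_eq_cfc_sq, hA.trace_cfc, RCLike.ofReal_eq_complex_ofReal] at htrace
  exact_mod_cast htrace.symm

theorem PosSemidef.nuclearNorm_eq_trace (hA : A.PosSemidef) :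
    (nuclearNorm A : ℂ) = A.trace := by
  rw [hA.1.nuclearNorm_eq_sum_abs_eigenvalues, hA.1.trace_eq_sum_eigenvalues]
  push_cast
  exact Finset.sum_congr rfl fun i _ => by rw [abs_of_nonneg (hA.eigenvalues_nonneg i)]; rfl

theorem IsHermitian.neg_trace_le_nuclearNorm (hA : A.IsHermitian) :
    -A.trace ≤ (nuclearNorm A : ℂ) := by
  rw [hA.nuclearNorm_eq_sum_abs_eigenvalues, hA.trace_eq_sum_eigenvalues,
    RCLike.ofReal_eq_complex_ofReal]
  have : -∑ i, hA.eigenvalues i ≤ ∑ i, |hA.eigenvalues i| := by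
    rw [← Finset.sum_neg_distrib]
    exact Finset.sum_le_sum fun i _ => neg_le_abs _
  exact_mod_cast this

end Matrix

theorem sum_abs_le_of_sum_eq_zero {ι : Type*} [Fintype ι] (μ : ι → ℝ) (hsum : ∑ i, μ i = 0)
    {k : ℕ} (hk : Fintype.card {i // μ i < 0} ≤ k) :
    ∑ i, |μ i| ≤ 2 * √k * √(∑ i, μ i ^ 2) := by
  classical
  set S := Finset.univ.filter (μ · < 0)
  have habs : ∑ i, |μ i| = 2 * ∑ i ∈ S, -μ i := by
    calc ∑ i, |μ i| = ∑ i, (|μ i| - μ i) := by rw [Finset.sum_sub_distrib, hsum, sub_zero]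
      _ = ∑ i, if μ i < 0 then 2 * -μ i else 0 := by
        refine Finset.sum_congr rfl fun i _ => ?_
        split_ifs with h
        · rw [abs_of_neg h]; ring
        · rw [abs_of_nonneg (not_lt.mp h), sub_self]
      _ = 2 * ∑ i ∈ S, -μ i := by rw [← Finset.sum_filter, Finset.mul_sum]
  have hS : (∑ i ∈ S, -μ i) ^ 2 ≤ k * ∑ i, μ i ^ 2 :=
    calc (∑ i ∈ S, -μ i) ^ 2 ≤ S.card * ∑ i ∈ S, (-μ i) ^ 2 := sq_sum_le_card_mul_sum_sq
      _ ≤ k * ∑ i, μ i ^ 2 := by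
        gcongr
        · exact_mod_cast (Fintype.card_subtype _).symm.trans_le hk
        · simp only [neg_sq]
          exact Finset.sum_le_sum_of_subset_of_nonneg S.subset_univ fun i _ _ => sq_nonneg _
  rw [habs, mul_assoc, ← Real.sqrt_mul k.cast_nonneg]
  gcongr
  exact (le_abs_self _).trans (Real.abs_le_sqrt hS)

theorem stmt_15_general (m r : ℕ)
    (Bstar : Matrix (Fin m) (Fin m) ℂ)
    (hB1 : Bstar.PosSemidef) (hB2 : Bstar.trace = 1)
    (U : Matrix (Fin m) (Fin r) ℂ) (hU : Uᴴ * U = 1)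
    (d : Fin r → ℝ)
    (hdec : Bstar = U * Matrix.diagonal (fun i => (d i : ℂ)) * Uᴴ)
    (B : Matrix (Fin m) (Fin m) ℂ) (hB : B.PosSemidef) (hBtr : B.trace = 1)
    (Φ : Matrix (Fin m) (Fin m) ℂ) (hΦ : Φ = B - Bstar)
    (Q : Matrix (Fin m) (Fin m) ℂ) (hQ : Q = 1 - U * Uᴴ) :
    (Q * Φ * Q).trace = -((Φ - Q * Φ * Q).trace) ∧
    (Q * Φ * Q).PosSemidef ∧
    nuclearNorm (Q * Φ * Q) ≤ nuclearNorm (Φ - Q * Φ * Q) ∧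
    nuclearNorm Φ ≤ 2 * Real.sqrt (2 * r) * Real.sqrt (frobSq Φ) := by
  have hΦ_herm : Φ.IsHermitian := hΦ ▸ hB.1.sub hB1.1
  have hΦ_trace : Φ.trace = 0 := by rw [hΦ, trace_sub, hBtr, hB2, sub_self]
  have hQU : Q * U = 0 := by
    rw [hQ, Matrix.sub_mul, Matrix.one_mul, Matrix.mul_assoc, hU, Matrix.mul_one, sub_self]
  have hQ_herm : Qᴴ = Q := by simp [hQ]
  have hQΦQ : Q * Φ * Q = Q * B * Qᴴ := by
    rw [hQ_herm, hΦ, hdec, mul_sub, sub_mul, ← Matrix.mul_assoc, ← Matrix.mul_assoc, hQU]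
    simp
  have hpsd : (Q * Φ * Q).PosSemidef := hQΦQ ▸ hB.mul_mul_conjTranspose_same Q
  have htrace : (Q * Φ * Q).trace = -((Φ - Q * Φ * Q).trace) := by
    rw [trace_sub, hΦ_trace, zero_sub, neg_neg]
  refine ⟨htrace, hpsd, ?_, ?_⟩
  · have := (hΦ_herm.sub hpsd.1).neg_trace_le_nuclearNorm
    rwa [← htrace, ← hpsd.nuclearNorm_eq_trace, Complex.real_le_real] at this
  · have hker : ∀ x, Uᴴ *ᵥ x = 0 → 0 ≤ star x ⬝ᵥ (Φ *ᵥ x) := fun x hx => by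
      simpa [hΦ, hdec, sub_mulVec, ← mulVec_mulVec, hx] using hB.dotProduct_mulVec_nonneg x
    have hcard := hΦ_herm.card_neg_eigenvalues_le U hker
    have hsum : ∑ i, hΦ_herm.eigenvalues i = 0 := by
      have := hΦ_herm.trace_eq_sum_eigenvalues
      rw [hΦ_trace, RCLike.ofReal_eq_complex_ofReal] at this
      exact_mod_cast this.symm
    rw [hΦ_herm.nuclearNorm_eq_sum_abs_eigenvalues, hΦ_herm.frobSq_eq_sum_sq_eigenvalues]
    calc _ ≤ 2 * √r * √(∑ i, hΦ_herm.eigenvalues i ^ 2) :=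
          sum_abs_le_of_sum_eq_zero _ hsum (by simpa using hcard)
      _ ≤ _ := by gcongr; linarith

/-- Let `B* ⪰ 0`, `tr(B*) = 1`, `rank(B*) ≤ r`, with eigendecomposition
`B* = U Λ Uᴴ` (`U ∈ ℂ^{m×r}` with orthonormal columns, `Λ` real diagonal), and
let `B ⪰ 0`, `tr(B) = 1`. With `P = U Uᴴ`, `Q = 1 − P`, the projections onto
the tangent space `𝕋 = 𝕋(B*)` and its orthocomplement are
`Π_𝕋 Φ = Φ − QΦQ` and `Π_{𝕋^⊥} Φ = QΦQ`. Then for `Φ = B − B*`: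
`tr(Π_{𝕋^⊥}Φ) = −tr(Π_𝕋 Φ)`, `Π_{𝕋^⊥}Φ ⪰ 0`,
`‖Π_{𝕋^⊥}Φ‖₁ ≤ ‖Π_𝕋 Φ‖₁`, and `‖Φ‖₁ ≤ 2√(2r)‖Φ‖₂`. -/
theorem stmt_15 (m r : ℕ)
    (Bstar : Matrix (Fin m) (Fin m) ℂ)
    (hB1 : Bstar.PosSemidef) (hB2 : Bstar.trace = 1) (hB3 : Bstar.rank ≤ r)
    (U : Matrix (Fin m) (Fin r) ℂ) (hU : Uᴴ * U = 1)
    (d : Fin r → ℝ)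
    (hdec : Bstar = U * Matrix.diagonal (fun i => (d i : ℂ)) * Uᴴ)
    (B : Matrix (Fin m) (Fin m) ℂ) (hB : B.PosSemidef) (hBtr : B.trace = 1)
    (Φ : Matrix (Fin m) (Fin m) ℂ) (hΦ : Φ = B - Bstar)
    (Q : Matrix (Fin m) (Fin m) ℂ) (hQ : Q = 1 - U * Uᴴ) :
    (Q * Φ * Q).trace = -((Φ - Q * Φ * Q).trace) ∧
    (Q * Φ * Q).PosSemidef ∧
    nuclearNorm (Q * Φ * Q) ≤ nuclearNorm (Φ - Q * Φ * Q) ∧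
    nuclearNorm Φ ≤ 2 * Real.sqrt (2 * r) * Real.sqrt (frobSq Φ) :=
  stmt_15_general m r Bstar hB1 hB2 U hU d hdec B hB hBtr Φ hΦ Q hQ
end

section
/- Let Υ ∈ ℍ^m be Hermitian, 0 ≤ λ < 1/n, and γ = 1 − nλ. Then the minimizer of B ↦ (1/n)‖Υ − B‖₂² − λ‖B‖₂² over {B ⪰ 0, tr(B) = 1} equals the Frobenius projection of Υ/γ onto that set; moreover, if Υ = U diag(υ) U^H is an eigendecomposition, the minimizer equals U diag(φ̂) U^H where φ̂ is the Euclidean projection of υ/γ onto the simplex Δ^m. -/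
open Matrix ComplexOrder

/-!
Since `1 - γ = nλ`, completing the square gives
`n f(B) = γ ‖Υ/γ - B‖₂² + (1 - γ⁻¹) ‖Υ‖₂²`, so `f` and the distance to `Υ/γ` have the same
minimizers on the spectahedron. If `Υ/γ = U D Uᴴ` with `D = diag(υ/γ)`, conjugation by `U`
turns the distance from `Υ/γ` to `B` into the distance from `D` to `C = UᴴBU`, which is at least
the distance from `υ/γ` to the real diagonal of `C`, a point of the simplex; hence it is at least
`‖υ/γ - φ̂‖`, with equality at `B = U diag(φ̂) Uᴴ`. The minimizer is unique because Euclidean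
space is strictly convex.
-/

theorem norm_sub_sq_sub_mul_norm_sq {𝕜 E : Type*} [RCLike 𝕜] [NormedAddCommGroup E]
    [InnerProductSpace 𝕜 E] {γ : ℝ} (hγ : γ ≠ 0) (x y : E) :
    ‖x - y‖ ^ 2 - (1 - γ) * ‖y‖ ^ 2
      = γ * ‖(γ⁻¹ : 𝕜) • x - y‖ ^ 2 + (1 - γ⁻¹) * ‖x‖ ^ 2 := by
  rw [← RCLike.ofReal_inv, norm_sub_sq (𝕜 := 𝕜), norm_sub_sq (𝕜 := 𝕜), inner_smul_left,
    norm_smul, RCLike.conj_ofReal, RCLike.re_ofReal_mul, RCLike.norm_ofReal, mul_pow, sq_abs]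
  field_simp
  ring

theorem eq_of_norm_sub_le_norm_sub_midpoint {E : Type*} [NormedAddCommGroup E] [NormedSpace ℝ E]
    [StrictConvexSpace ℝ E] {x y₁ y₂ : E} (h : ‖x - y₁‖ = ‖x - y₂‖)
    (hmid : ‖x - y₁‖ ≤ ‖x - midpoint ℝ y₁ y₂‖) : y₁ = y₂ := by
  have hx : x - midpoint ℝ y₁ y₂ = (1 / 2 : ℝ) • ((x - y₁) + (x - y₂)) := by
    rw [midpoint_eq_smul_add, invOf_eq_inv]
    module
  by_contra hne
  have hlt := (norm_midpoint_lt_iff h).mpr (fun h' => hne (sub_right_injective h'))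
  rw [← hx] at hlt
  exact hlt.not_ge hmid

theorem isMinOn_iff_of_eq_mul_add {α : Type*} {f g : α → ℝ} {s : Set α} {x : α} {a c : ℝ}
    (ha : 0 < a) (h : ∀ y, f y = a * g y + c) : IsMinOn f s x ↔ IsMinOn g s x := by
  simp only [isMinOn_iff, h, add_le_add_iff_right, mul_le_mul_iff_right₀ ha]

section Spectahedron

variable {n 𝕜 : Type*} [Fintype n] [RCLike 𝕜]

variable (n 𝕜) in
def spectahedron : Set (Matrix n n 𝕜) :=
  {B | B.PosSemidef ∧ B.trace = 1}

variable (n 𝕜) in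
theorem convex_spectahedron : Convex ℝ (spectahedron n 𝕜) := by
  rintro B₁ ⟨hB₁, htr₁⟩ B₂ ⟨hB₂, htr₂⟩ a b ha hb hab
  refine ⟨(hB₁.smul ha).add (hB₂.smul hb), ?_⟩
  rw [trace_add, trace_smul, trace_smul, htr₁, htr₂, ← add_smul, hab, one_smul]

theorem isMinOn_spectahedron_iff {g : Matrix n n 𝕜 → ℝ} {B : Matrix n n 𝕜} :
    IsMinOn g (spectahedron n 𝕜) B ↔ ∀ B', B'.PosSemidef → B'.trace = 1 → g B ≤ g B' := by
  simp only [isMinOn_iff, spectahedron, Set.mem_ofPred_eq, and_imp]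

theorem re_diag_mem_stdSimplex {C : Matrix n n 𝕜} (hC : C ∈ spectahedron n 𝕜) :
    (fun i => RCLike.re (C i i)) ∈ stdSimplex ℝ n := by
  refine ⟨fun i => RCLike.nonneg_iff.mp hC.1.diag_nonneg |>.1, ?_⟩
  simpa [trace, map_sum] using congrArg RCLike.re hC.2

theorem unitary_conj_diagonal_mem_spectahedron [DecidableEq n] {U : Matrix n n 𝕜}
    (hU : U ∈ unitaryGroup n 𝕜) {φ : n → ℝ} (hφ : φ ∈ stdSimplex ℝ n) :
    U * diagonal (fun i => (φ i : 𝕜)) * Uᴴ ∈ spectahedron n 𝕜 := by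
  have hUU : Uᴴ * U = 1 := mem_unitaryGroup_iff'.mp hU
  have hdiag : (diagonal fun i => (φ i : 𝕜)).PosSemidef :=
    PosSemidef.diagonal fun i => RCLike.ofReal_nonneg.mpr (hφ.1 i)
  refine ⟨hdiag.mul_mul_conjTranspose_same U, ?_⟩
  rw [trace_mul_cycle, hUU, Matrix.one_mul, trace_diagonal, ← RCLike.ofReal_sum, hφ.2,
    RCLike.ofReal_one]

end Spectahedron

section Frobenius

variable {m : ℕ}

def frobVec (A : Matrix (Fin m) (Fin m) ℂ) : EuclideanSpace ℂ (Fin m × Fin m) :=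
  WithLp.toLp 2 fun p => A p.1 p.2

theorem frobSq_eq_norm_frobVec_sq (A : Matrix (Fin m) (Fin m) ℂ) :
    frobSq A = ‖frobVec A‖ ^ 2 := by
  rw [EuclideanSpace.norm_sq_eq, frobSq, Fintype.sum_prod_type]
  rfl

theorem frobVec_add (A B : Matrix (Fin m) (Fin m) ℂ) : frobVec (A + B) = frobVec A + frobVec B :=
  rfl

theorem frobVec_sub (A B : Matrix (Fin m) (Fin m) ℂ) : frobVec (A - B) = frobVec A - frobVec B :=
  rfl

theorem frobVec_smul {R : Type*} [SMul R ℂ] (c : R) (A : Matrix (Fin m) (Fin m) ℂ) :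
    frobVec (c • A) = c • frobVec A :=
  rfl

theorem frobVec_midpoint (A B : Matrix (Fin m) (Fin m) ℂ) :
    frobVec (midpoint ℝ A B) = midpoint ℝ (frobVec A) (frobVec B) := by
  rw [midpoint_eq_smul_add, midpoint_eq_smul_add, frobVec_smul, frobVec_add]

theorem frobVec_injective : Function.Injective (frobVec (m := m)) := fun A B h => by
  ext i j
  exact congrFun (congrArg WithLp.ofLp h) (i, j)

theorem frobSq_sub_sub_mul_frobSq {γ : ℝ} (hγ : γ ≠ 0) (X Y : Matrix (Fin m) (Fin m) ℂ) :
    frobSq (X - Y) - (1 - γ) * frobSq Y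
      = γ * frobSq ((γ⁻¹ : ℂ) • X - Y) + (1 - γ⁻¹) * frobSq X := by
  simp only [frobSq_eq_norm_frobVec_sq, frobVec_sub, frobVec_smul]
  exact norm_sub_sq_sub_mul_norm_sq hγ (frobVec X) (frobVec Y)

theorem one_div_mul_frobSq_sub_sub_mul_frobSq {n lam γ : ℝ} (hn : n ≠ 0) (hγ : γ = 1 - n * lam)
    (hγ₀ : γ ≠ 0) (X Y : Matrix (Fin m) (Fin m) ℂ) :
    1 / n * frobSq (X - Y) - lam * frobSq Y
      = γ / n * frobSq ((γ⁻¹ : ℂ) • X - Y) + (1 - γ⁻¹) / n * frobSq X := by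
  have hlam : lam = (1 - γ) / n := by
    rw [hγ]
    field_simp
    ring
  rw [hlam]
  linear_combination 1 / n * frobSq_sub_sub_mul_frobSq hγ₀ X Y

theorem Convex.eq_of_isMinOn_frobSq_sub {K : Set (Matrix (Fin m) (Fin m) ℂ)} (hK : Convex ℝ K)
    {A B₁ B₂ : Matrix (Fin m) (Fin m) ℂ} (h₁ : IsMinOn (fun B => frobSq (A - B)) K B₁)
    (h₂ : IsMinOn (fun B => frobSq (A - B)) K B₂) (hB₁ : B₁ ∈ K) (hB₂ : B₂ ∈ K) : B₁ = B₂ := by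
  have hle : ∀ {B B'}, frobSq (A - B) ≤ frobSq (A - B') →
      ‖frobVec A - frobVec B‖ ≤ ‖frobVec A - frobVec B'‖ := fun h => by
    rwa [frobSq_eq_norm_frobVec_sq, frobSq_eq_norm_frobVec_sq, frobVec_sub, frobVec_sub,
      sq_le_sq₀ (norm_nonneg _) (norm_nonneg _)] at h
  apply frobVec_injective
  have hmid := hle (isMinOn_iff.mp h₁ _ (hK.midpoint_mem hB₁ hB₂))
  rw [frobVec_midpoint] at hmid
  refine eq_of_norm_sub_le_norm_sub_midpoint ?_ hmid
  exact (hle (h₁ hB₂)).antisymm (hle (h₂ hB₁))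

theorem frobSq_eq_re_trace (X : Matrix (Fin m) (Fin m) ℂ) : frobSq X = (Xᴴ * X).trace.re := by
  simp only [frobSq, trace, diag, mul_apply, conjTranspose_apply, Complex.re_sum]
  rw [Finset.sum_comm]
  refine Finset.sum_congr rfl fun i _ => Finset.sum_congr rfl fun j _ => ?_
  rw [Complex.sq_norm, Complex.normSq_apply, RCLike.star_def, Complex.mul_re, Complex.conj_re,
    Complex.conj_im]
  ring

theorem frobSq_unitary_conj {U : Matrix (Fin m) (Fin m) ℂ} (hU : U ∈ unitaryGroup (Fin m) ℂ)
    (X : Matrix (Fin m) (Fin m) ℂ) : frobSq (U * X * Uᴴ) = frobSq X := by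
  have hUU : Uᴴ * U = 1 := mem_unitaryGroup_iff'.mp hU
  have hconj : (U * X * Uᴴ)ᴴ * (U * X * Uᴴ) = U * (Xᴴ * X) * Uᴴ := by
    simp only [conjTranspose_mul, conjTranspose_conjTranspose, Matrix.mul_assoc]
    rw [← Matrix.mul_assoc Uᴴ U, hUU, Matrix.one_mul]
  rw [frobSq_eq_re_trace, frobSq_eq_re_trace, hconj, trace_mul_cycle, hUU, Matrix.one_mul]

theorem frobSq_diagonal_ofReal (d : Fin m → ℝ) :
    frobSq (diagonal fun i => (d i : ℂ)) = ∑ i, d i ^ 2 := by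
  refine Finset.sum_congr rfl fun i _ => ?_
  rw [Finset.sum_eq_single i (fun j _ hj => by simp [diagonal_apply_ne _ hj.symm]) (by simp)]
  simp [sq_abs]

theorem sum_sq_re_diag_le_frobSq (X : Matrix (Fin m) (Fin m) ℂ) :
    ∑ i, (X i i).re ^ 2 ≤ frobSq X := by
  refine Finset.sum_le_sum fun i _ => ?_
  calc (X i i).re ^ 2 ≤ ‖X i i‖ ^ 2 :=
        sq_le_sq.mpr ((abs_norm (X i i)).symm ▸ Complex.abs_re_le_norm _)
    _ ≤ ∑ j, ‖X i j‖ ^ 2 :=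
      Finset.single_le_sum (f := fun j => ‖X i j‖ ^ 2) (fun j _ => sq_nonneg _) (Finset.mem_univ i)

theorem isMinOn_frobSq_sub_unitary_conj_diagonal {U : Matrix (Fin m) (Fin m) ℂ}
    (hU : U ∈ unitaryGroup (Fin m) ℂ) {d φ : Fin m → ℝ}
    (hφ : IsMinOn (fun ψ => ∑ i, (d i - ψ i) ^ 2) (stdSimplex ℝ (Fin m)) φ) :
    IsMinOn (fun B => frobSq (U * diagonal (fun i => (d i : ℂ)) * Uᴴ - B))
      (spectahedron (Fin m) ℂ) (U * diagonal (fun i => (φ i : ℂ)) * Uᴴ) := by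
  have hUU : Uᴴ * U = 1 := mem_unitaryGroup_iff'.mp hU
  have hUU' : U * Uᴴ = 1 := mem_unitaryGroup_iff.mp hU
  refine isMinOn_iff.mpr fun B hB => ?_
  set C := Uᴴ * B * U
  have hC : C ∈ spectahedron (Fin m) ℂ :=
    ⟨hB.1.conjTranspose_mul_mul_same U, by
      rw [trace_mul_cycle, hUU', Matrix.one_mul, hB.2]⟩
  have hBC : B = U * C * Uᴴ := by
    simp only [C, Matrix.mul_assoc, hUU', Matrix.mul_one]
    rw [← Matrix.mul_assoc, hUU', Matrix.one_mul]
  calc frobSq (U * diagonal (fun i => (d i : ℂ)) * Uᴴ - U * diagonal (fun i => (φ i : ℂ)) * Uᴴ)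
      = ∑ i, (d i - φ i) ^ 2 := by
        rw [← Matrix.sub_mul, ← Matrix.mul_sub, frobSq_unitary_conj hU, diagonal_sub]
        simpa only [Pi.sub_apply, Complex.ofReal_sub] using frobSq_diagonal_ofReal (d - φ)
    _ ≤ ∑ i, (d i - (C i i).re) ^ 2 := isMinOn_iff.mp hφ _ (re_diag_mem_stdSimplex hC)
    _ ≤ frobSq (diagonal (fun i => (d i : ℂ)) - C) := by
        simpa using sum_sq_re_diag_le_frobSq (diagonal (fun i => (d i : ℂ)) - C)
    _ = frobSq (U * diagonal (fun i => (d i : ℂ)) * Uᴴ - B) := by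
        rw [hBC, ← Matrix.sub_mul, ← Matrix.mul_sub, frobSq_unitary_conj hU]

end Frobenius

theorem stmt_17_general (m n : ℕ) (hn : 0 < n)
    (Υ : Matrix (Fin m) (Fin m) ℂ)
    (lam : ℝ) (hlam' : lam < 1 / n)
    (γ : ℝ) (hγ : γ = 1 - n * lam)
    (f : Matrix (Fin m) (Fin m) ℂ → ℝ)
    (hf : ∀ B, f B = (1 / n : ℝ) * frobSq (Υ - B) - lam * frobSq B) :
    (∀ Bhat : Matrix (Fin m) (Fin m) ℂ, Bhat.PosSemidef → Bhat.trace = 1 →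
      ((∀ B : Matrix (Fin m) (Fin m) ℂ, B.PosSemidef → B.trace = 1 →
          f Bhat ≤ f B) ↔
       (∀ B : Matrix (Fin m) (Fin m) ℂ, B.PosSemidef → B.trace = 1 →
          frobSq ((γ⁻¹ : ℂ) • Υ - Bhat) ≤ frobSq ((γ⁻¹ : ℂ) • Υ - B)))) ∧
    (∀ (U : Matrix (Fin m) (Fin m) ℂ) (υ : Fin m → ℝ),
      Uᴴ * U = 1 → Υ = U * Matrix.diagonal (fun i => (υ i : ℂ)) * Uᴴ →
      ∀ φhat ∈ stdSimplex ℝ (Fin m),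
        (∀ φ ∈ stdSimplex ℝ (Fin m),
          ∑ i, (υ i / γ - φhat i) ^ 2 ≤ ∑ i, (υ i / γ - φ i) ^ 2) →
        ((∀ B : Matrix (Fin m) (Fin m) ℂ, B.PosSemidef → B.trace = 1 →
            f (U * Matrix.diagonal (fun i => (φhat i : ℂ)) * Uᴴ) ≤ f B) ∧
         (∀ Bhat : Matrix (Fin m) (Fin m) ℂ, Bhat.PosSemidef → Bhat.trace = 1 →
            (∀ B : Matrix (Fin m) (Fin m) ℂ, B.PosSemidef → B.trace = 1 →
              f Bhat ≤ f B) →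
            Bhat = U * Matrix.diagonal (fun i => (φhat i : ℂ)) * Uᴴ))) := by
  have hn' : (0 : ℝ) < n := Nat.cast_pos.mpr hn
  have hγpos : 0 < γ := by
    have := (lt_div_iff₀ hn').mp hlam'
    linarith
  set A := (γ⁻¹ : ℂ) • Υ
  have hfA : ∀ B, f B = γ / n * frobSq (A - B) + (1 - γ⁻¹) / n * frobSq Υ := fun B =>
    (hf B).trans (one_div_mul_frobSq_sub_sub_mul_frobSq hn'.ne' hγ hγpos.ne' Υ B)
  have hmin : ∀ B, IsMinOn f (spectahedron (Fin m) ℂ) B ↔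
      IsMinOn (fun B => frobSq (A - B)) (spectahedron (Fin m) ℂ) B :=
    fun B => isMinOn_iff_of_eq_mul_add (div_pos hγpos hn') hfA
  refine ⟨fun Bhat _ _ => ?_, fun U υ hU hΥ φhat hφhat hproj => ?_⟩
  · simpa only [isMinOn_spectahedron_iff] using hmin Bhat
  have hUmem : U ∈ unitaryGroup (Fin m) ℂ := mem_unitaryGroup_iff'.mpr hU
  have hA : A = U * diagonal (fun i => ((υ i / γ : ℝ) : ℂ)) * Uᴴ := by
    rw [show A = (γ⁻¹ : ℂ) • Υ from rfl, hΥ, ← Matrix.smul_mul, ← Matrix.mul_smul,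
      ← diagonal_smul]
    congr
    funext i
    simp [div_eq_inv_mul]
  have hBc := isMinOn_frobSq_sub_unitary_conj_diagonal hUmem (isMinOn_iff.mpr hproj)
  rw [← hA] at hBc
  refine ⟨isMinOn_spectahedron_iff.mp ((hmin _).mpr hBc), fun Bhat hBhat htr hopt => ?_⟩
  exact (convex_spectahedron _ _).eq_of_isMinOn_frobSq_sub
    ((hmin Bhat).mp (isMinOn_spectahedron_iff.mpr hopt)) hBc ⟨hBhat, htr⟩
    (unitary_conj_diagonal_mem_spectahedron hUmem hφhat)

/-- For Hermitian `Υ`, `0 ≤ λ < 1/n` and `γ = 1 − nλ`, minimizing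
`B ↦ (1/n)‖Υ − B‖₂² − λ‖B‖₂²` over `{B ⪰ 0, tr B = 1}` is the same as the
Frobenius projection of `Υ/γ` onto that set; moreover, if `Υ = U diag(υ) Uᴴ`
is an eigendecomposition and `φ̂` is the Euclidean projection of `υ/γ` onto
the simplex `Δ^m`, the minimizer equals `U diag(φ̂) Uᴴ`. -/
theorem stmt_17 (m n : ℕ) (hn : 0 < n)
    (Υ : Matrix (Fin m) (Fin m) ℂ) (hΥ : Υ.IsHermitian)
    (lam : ℝ) (hlam : 0 ≤ lam) (hlam' : lam < 1 / n)
    (γ : ℝ) (hγ : γ = 1 - n * lam)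
    (f : Matrix (Fin m) (Fin m) ℂ → ℝ)
    (hf : ∀ B, f B = (1 / n : ℝ) * frobSq (Υ - B) - lam * frobSq B) :
    (∀ Bhat : Matrix (Fin m) (Fin m) ℂ, Bhat.PosSemidef → Bhat.trace = 1 →
      ((∀ B : Matrix (Fin m) (Fin m) ℂ, B.PosSemidef → B.trace = 1 →
          f Bhat ≤ f B) ↔
       (∀ B : Matrix (Fin m) (Fin m) ℂ, B.PosSemidef → B.trace = 1 →
          frobSq ((γ⁻¹ : ℂ) • Υ - Bhat) ≤ frobSq ((γ⁻¹ : ℂ) • Υ - B)))) ∧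
    (∀ (U : Matrix (Fin m) (Fin m) ℂ) (υ : Fin m → ℝ),
      Uᴴ * U = 1 → Υ = U * Matrix.diagonal (fun i => (υ i : ℂ)) * Uᴴ →
      ∀ φhat ∈ stdSimplex ℝ (Fin m),
        (∀ φ ∈ stdSimplex ℝ (Fin m),
          ∑ i, (υ i / γ - φhat i) ^ 2 ≤ ∑ i, (υ i / γ - φ i) ^ 2) →
        ((∀ B : Matrix (Fin m) (Fin m) ℂ, B.PosSemidef → B.trace = 1 →
            f (U * Matrix.diagonal (fun i => (φhat i : ℂ)) * Uᴴ) ≤ f B) ∧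
         (∀ Bhat : Matrix (Fin m) (Fin m) ℂ, Bhat.PosSemidef → Bhat.trace = 1 →
            (∀ B : Matrix (Fin m) (Fin m) ℂ, B.PosSemidef → B.trace = 1 →
              f Bhat ≤ f B) →
            Bhat = U * Matrix.diagonal (fun i => (φhat i : ℂ)) * Uᴴ))) :=
  stmt_17_general m n hn Υ lam hlam' γ hγ f hf
end
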